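/- arXiv:2009.05134 — 4 statements merged into one kernel-verified Lean document; each statement's English description precedes it below -/
import Mathlib

section
/- Suppose Δ² - ε·Δ + x = Σ_i w_i* w_i in ℝ[Γ] for some ε > 0, some x ∈ I[Γ], and elements w_i ∈ ℝ[Γ], and suppose M·Δ - x = Σ_j v_j* v_j with v_j ∈ I[Γ] for some M with 0 < M < ε. Then Δ² - (ε - M)·Δ is a sum of hermitian squares in ℝ[Γ], with ε - M > 0. -/
/-- The involution on the real group algebra extending `γ ↦ γ⁻¹`. -/
noncomputable def astar {Γ : Type*} [Group Γ] (x : MonoidAlgebra ℝ Γ) :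
    MonoidAlgebra ℝ Γ :=
  MonoidAlgebra.ofCoeff (Finsupp.mapDomain (fun g => g⁻¹) x.coeff)

/-- The augmentation map `Σ a_γ γ ↦ Σ a_γ`. -/
def aug {Γ : Type*} [Group Γ] (x : MonoidAlgebra ℝ Γ) : ℝ :=
  x.coeff.sum fun _ a => a

/-- The Laplacian `Δ = |S|·1 - Σ_{s∈S} s`. -/
noncomputable def Delta {Γ : Type*} [Group Γ] (S : Finset Γ) :
    MonoidAlgebra ℝ Γ :=
  (S.card : ℝ) • (1 : MonoidAlgebra ℝ Γ) - ∑ s ∈ S, MonoidAlgebra.single s (1 : ℝ)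

theorem Fin.sum_univ_append {α β : Type*} [AddCommMonoid β] {n m : ℕ} (f : α → β)
    (w : Fin n → α) (v : Fin m → α) :
    ∑ i, f (Fin.append w v i) = ∑ i, f (w i) + ∑ j, f (v j) := by
  simp only [Fin.sum_univ_add, Fin.append_left, Fin.append_right]

theorem stmt3_general {Γ : Type*} [Group Γ] (S : Finset Γ)
    (ε M : ℝ) (hMε : M < ε)
    (x : MonoidAlgebra ℝ Γ)
    (n : ℕ) (w : Fin n → MonoidAlgebra ℝ Γ)
    (hw : (Delta S) ^ 2 - ε • Delta S + x = ∑ i, astar (w i) * w i)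
    (m : ℕ) (v : Fin m → MonoidAlgebra ℝ Γ)
    (hv : M • Delta S - x = ∑ j, astar (v j) * v j) :
    0 < ε - M ∧
    ∃ (k : ℕ) (u : Fin k → MonoidAlgebra ℝ Γ),
      (Delta S) ^ 2 - (ε - M) • Delta S = ∑ i, astar (u i) * u i := by
  refine ⟨sub_pos.mpr hMε, n + m, Fin.append w v, ?_⟩
  calc (Delta S) ^ 2 - (ε - M) • Delta S
      = ((Delta S) ^ 2 - ε • Delta S + x) + (M • Delta S - x) := by rw [sub_smul]; abel
    _ = ∑ i, astar (w i) * w i + ∑ j, astar (v j) * v j := by rw [hw, hv]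
    _ = ∑ i, astar (Fin.append w v i) * Fin.append w v i :=
      (Fin.sum_univ_append (fun a => astar a * a) w v).symm

theorem stmt3 {Γ : Type*} [Group Γ] (S : Finset Γ)
    (ε M : ℝ) (hε : 0 < ε) (hM : 0 < M) (hMε : M < ε)
    (x : MonoidAlgebra ℝ Γ) (hx : aug x = 0)
    (n : ℕ) (w : Fin n → MonoidAlgebra ℝ Γ)
    (hw : (Delta S) ^ 2 - ε • Delta S + x = ∑ i, astar (w i) * w i)
    (m : ℕ) (v : Fin m → MonoidAlgebra ℝ Γ) (hv0 : ∀ j, aug (v j) = 0)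
    (hv : M • Delta S - x = ∑ j, astar (v j) * v j) :
    0 < ε - M ∧
    ∃ (k : ℕ) (u : Fin k → MonoidAlgebra ℝ Γ),
      (Delta S) ^ 2 - (ε - M) • Delta S = ∑ i, astar (u i) * u i :=
  stmt3_general S ε M hMε x n w hw m v hv
end

section
/- Let Γ be a group generated by a finite symmetric set S, let H be a Hilbert space, and let α : Γ → H satisfy: (i) |α(γγ₁) - α(γγ₂)| = |α(γ₁) - α(γ₂)| for all γ, γ₁, γ₂ ∈ Γ, and (ii) Σ_{s∈S} α(γs) = |S|·α(γ) for all γ ∈ Γ. If t ∈ Γ satisfies t⁻¹St = S, then the difference α(γt) - α(γ) is independent of γ ∈ Γ. -/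
/-!
The difference `f γ = α (γ * t) - α γ` has constant norm by left invariance, and it is `S`-flat
because conjugation by `t` permutes `S`. A flat function of constant norm into an inner product
space is right-invariant under `S` (equality in Cauchy–Schwarz), hence constant, as `S`
generates `Γ`.
-/

open Finset
open scoped RealInnerProductSpace

theorem eq_of_sum_eq_card_smul_of_norm_le {H ι : Type*} [NormedAddCommGroup H]
    [InnerProductSpace ℝ H] (s : Finset ι) (w : ι → H) (v : H) (hw : ∀ i ∈ s, ‖w i‖ ≤ ‖v‖)
    (hsum : ∑ i ∈ s, w i = (#s : ℝ) • v) : ∀ i ∈ s, w i = v := by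
  have hinner_le : ∀ i ∈ s, ⟪v, w i⟫ ≤ ‖v‖ ^ 2 := fun i hi =>
    calc ⟪v, w i⟫ ≤ ‖v‖ * ‖w i‖ := real_inner_le_norm _ _
      _ ≤ ‖v‖ ^ 2 := by nlinarith [hw i hi, norm_nonneg v]
  have hinner_sum : ∑ i ∈ s, ⟪v, w i⟫ = ∑ _i ∈ s, ‖v‖ ^ 2 := by
    rw [← inner_sum, hsum, real_inner_smul_right, real_inner_self_eq_norm_sq, sum_const,
      nsmul_eq_mul]
  intro i hi
  have hinner : ⟪v, w i⟫ = ‖v‖ ^ 2 := (sum_eq_sum_iff_of_le hinner_le).mp hinner_sum i hi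
  have hdist : ‖w i - v‖ ^ 2 ≤ 0 := by
    rw [norm_sub_sq_real, real_inner_comm, hinner]
    nlinarith [hw i hi, norm_nonneg (w i)]
  exact sub_eq_zero.mp (norm_eq_zero.mp (by nlinarith [norm_nonneg (w i - v)]))

theorem Finset.sum_comp_conj_of_conj_mem {Γ M : Type*} [Group Γ] [AddCommMonoid M]
    (S : Finset Γ) (t : Γ) (ht : ∀ s ∈ S, t⁻¹ * s * t ∈ S) (g : Γ → M) :
    ∑ s ∈ S, g (t⁻¹ * s * t) = ∑ s ∈ S, g s := by
  let conj : Γ ↪ Γ := ⟨fun s => t⁻¹ * s * t, fun a b h => mul_left_cancel (mul_right_cancel h)⟩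
  have hmap : S.map conj = S := map_eq_of_subset fun x hx => by
    obtain ⟨s, hs, rfl⟩ := mem_map.mp hx
    exact ht s hs
  conv_rhs => rw [← hmap, sum_map]
  rfl

section Flat

variable {Γ E : Type*} [Group Γ] [AddCommGroup E] [Module ℝ E]

def IsFlat (S : Finset Γ) (f : Γ → E) : Prop :=
  ∀ γ, ∑ s ∈ S, f (γ * s) = (#S : ℝ) • f γ

theorem IsFlat.sub {S : Finset Γ} {f g : Γ → E} (hf : IsFlat S f) (hg : IsFlat S g) :
    IsFlat S (f - g) := fun γ => by
  simp only [Pi.sub_apply, sum_sub_distrib, hf γ, hg γ, smul_sub]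

theorem IsFlat.comp_mul_right {S : Finset Γ} {f : Γ → E} (hf : IsFlat S f) {t : Γ}
    (ht : ∀ s ∈ S, t⁻¹ * s * t ∈ S) : IsFlat S (fun γ => f (γ * t)) := fun γ =>
  calc ∑ s ∈ S, f (γ * s * t) = ∑ s ∈ S, f (γ * t * (t⁻¹ * s * t)) := by simp only [mul_assoc,
        mul_inv_cancel_left]
    _ = ∑ s ∈ S, f (γ * t * s) := S.sum_comp_conj_of_conj_mem t ht fun s => f (γ * t * s)
    _ = (#S : ℝ) • f (γ * t) := hf (γ * t)

theorem IsFlat.apply_mul_eq_of_norm_eq {H : Type*} [NormedAddCommGroup H]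
    [InnerProductSpace ℝ H] {S : Finset Γ} {f : Γ → H} (hf : IsFlat S f) {c : ℝ}
    (hc : ∀ γ, ‖f γ‖ = c) (γ : Γ) : ∀ s ∈ S, f (γ * s) = f γ :=
  eq_of_sum_eq_card_smul_of_norm_le S (fun s => f (γ * s)) (f γ) (fun s _ => by simp [hc])
    (hf γ)

end Flat

theorem Subgroup.apply_mul_eq_of_mem_closure {Γ X : Type*} [Group Γ] {S : Set Γ} {f : Γ → X}
    (hf : ∀ γ, ∀ s ∈ S, f (γ * s) = f γ) {g : Γ} (hg : g ∈ closure S) (γ : Γ) :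
    f (γ * g) = f γ := by
  induction hg using closure_induction generalizing γ with
  | mem s hs => exact hf γ s hs
  | one => rw [mul_one]
  | mul a b _ _ ha hb => rw [← mul_assoc, hb, ha]
  | inv a _ ha => simpa using (ha (γ * a⁻¹)).symm

theorem stmt7_general {Γ : Type*} [Group Γ] {H : Type*}
    [NormedAddCommGroup H] [InnerProductSpace ℝ H]
    (S : Finset Γ)
    (hgen : Subgroup.closure (S : Set Γ) = ⊤)
    (α : Γ → H)
    (hinv : ∀ γ γ₁ γ₂ : Γ, ‖α (γ * γ₁) - α (γ * γ₂)‖ = ‖α γ₁ - α γ₂‖)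
    (hflat : ∀ γ : Γ, ∑ s ∈ S, α (γ * s) = (S.card : ℝ) • α γ)
    (t : Γ) (ht : ∀ s ∈ S, t⁻¹ * s * t ∈ S) :
    ∀ γ₁ γ₂ : Γ, α (γ₁ * t) - α γ₁ = α (γ₂ * t) - α γ₂ := by
  set f : Γ → H := fun γ => α (γ * t) - α γ
  have hf_flat : IsFlat S f := (IsFlat.comp_mul_right hflat ht).sub hflat
  have hf_norm : ∀ γ, ‖f γ‖ = ‖α t - α 1‖ := fun γ => by simpa using hinv γ t 1
  have hf_const : ∀ γ, f γ = f 1 := fun γ => by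
    simpa using Subgroup.apply_mul_eq_of_mem_closure (hf_flat.apply_mul_eq_of_norm_eq hf_norm)
      (hgen ▸ Subgroup.mem_top γ) 1
  exact fun γ₁ γ₂ => (hf_const γ₁).trans (hf_const γ₂).symm

theorem stmt7 {Γ : Type*} [Group Γ] {H : Type*}
    [NormedAddCommGroup H] [InnerProductSpace ℝ H] [CompleteSpace H]
    (S : Finset Γ) (hsym : ∀ s ∈ S, s⁻¹ ∈ S)
    (hgen : Subgroup.closure (S : Set Γ) = ⊤)
    (α : Γ → H)
    (hinv : ∀ γ γ₁ γ₂ : Γ, ‖α (γ * γ₁) - α (γ * γ₂)‖ = ‖α γ₁ - α γ₂‖)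
    (hflat : ∀ γ : Γ, ∑ s ∈ S, α (γ * s) = (S.card : ℝ) • α γ)
    (t : Γ) (ht : ∀ s ∈ S, t⁻¹ * s * t ∈ S) :
    ∀ γ₁ γ₂ : Γ, α (γ₁ * t) - α γ₁ = α (γ₂ * t) - α γ₂ :=
  stmt7_general S hgen α hinv hflat t ht
end

section
/- Let Γ be a group generated by a finite symmetric set S, H a Hilbert space, and α : Γ → H an S-flat Γ-invariant arrangement (i.e. |α(γγ₁) - α(γγ₂)| = |α(γ₁) - α(γ₂)| for all γ, γ₁, γ₂, and Σ_{s∈S} α(γs) = |S|·α(γ) for all γ). If t ∈ Γ has finite order and t⁻¹St = S, then α(γt) = α(γ) for all γ ∈ Γ. -/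
/-!
Put `f γ = α (γ t) - α γ`. Isometric invariance gives `‖f γ‖ = ‖α t - α 1‖` for all `γ`, and
since conjugation by `t` permutes `S`, flatness passes from `α` to `f`: `f γ` is the mean of the
vectors `f (γ s)`, `s ∈ S`, none of which is longer than `f γ`. In an inner product space this forces
`f (γ s) = f γ`, so `f` is constant because `S` generates `Γ`. Then `α (t ^ n) = α 1 + n • f 1`
for all `n`, and taking `n` the order of `t` gives `f 1 = 0`.
-/

open RealInnerProductSpace

theorem Finset.sum_comp_conj_eq_sum {G M : Type*} [Group G] [AddCommMonoid M] (S : Finset G)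
    {t : G} (ht : ∀ s ∈ S, t⁻¹ * s * t ∈ S) (g : G → M) :
    ∑ s ∈ S, g (t⁻¹ * s * t) = ∑ s ∈ S, g s := by
  let conj : G ↪ G := ⟨fun s ↦ t⁻¹ * s * t, fun a b h ↦ by simpa using h⟩
  have hS : S.map conj = S := Finset.map_eq_of_subset fun x hx ↦ by
    obtain ⟨s, hs, rfl⟩ := Finset.mem_map.mp hx
    exact ht s hs
  conv_rhs => rw [← hS]
  rw [Finset.sum_map]
  rfl

theorem eq_of_norm_le_of_sum_eq_card_smul {ι E : Type*} [NormedAddCommGroup E]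
    [InnerProductSpace ℝ E] (S : Finset ι) (v : ι → E) (w : E) (hv : ∀ i ∈ S, ‖v i‖ ≤ ‖w‖)
    (hsum : ∑ i ∈ S, v i = (S.card : ℝ) • w) : ∀ i ∈ S, v i = w := by
  have hle : ∀ i ∈ S, ⟪v i, w⟫ ≤ ‖w‖ ^ 2 := fun i hi ↦
    calc ⟪v i, w⟫ ≤ ‖v i‖ * ‖w‖ := real_inner_le_norm _ _
      _ ≤ ‖w‖ ^ 2 := by nlinarith [hv i hi, norm_nonneg w]
  have htotal : ∑ i ∈ S, ⟪v i, w⟫ = ∑ _i ∈ S, ‖w‖ ^ 2 := by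
    rw [← sum_inner, hsum, real_inner_smul_left, real_inner_self_eq_norm_sq, Finset.sum_const,
      nsmul_eq_mul]
  intro i hi
  have hinner : ⟪v i, w⟫ = ‖w‖ ^ 2 := (Finset.sum_eq_sum_iff_of_le hle).mp htotal i hi
  have hdist : ‖v i - w‖ ^ 2 ≤ 0 := by
    rw [norm_sub_sq_real, hinner]
    nlinarith [hv i hi, norm_nonneg (v i)]
  rw [← sub_eq_zero, ← norm_eq_zero]
  exact pow_eq_zero_iff two_ne_zero |>.mp (le_antisymm hdist (sq_nonneg _))

theorem eq_apply_one_of_apply_mul_eq {G X : Type*} [Group G] {S : Set G}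
    (hgen : Subgroup.closure S = ⊤) {f : G → X} (hf : ∀ γ, ∀ s ∈ S, f (γ * s) = f γ) (γ : G) :
    f γ = f 1 := by
  have hγ : γ ∈ Subgroup.closure S := hgen ▸ Subgroup.mem_top γ
  induction hγ using Subgroup.closure_induction_right with
  | one => rfl
  | mul_right x _ s hs ih => rw [hf x s hs, ih]
  | mul_inv_cancel x _ s hs ih => rw [← ih, ← hf (x * s⁻¹) s hs, inv_mul_cancel_right]

theorem apply_mul_pow_eq_add_nsmul {G M : Type*} [Monoid G] [AddMonoid M] {α : G → M} {t : G}
    {d : M} (hd : ∀ γ, α (γ * t) = α γ + d) (γ : G) (n : ℕ) :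
    α (γ * t ^ n) = α γ + n • d := by
  induction n with
  | zero => simp
  | succ n ih => rw [pow_succ, ← mul_assoc, hd, ih, succ_nsmul, add_assoc]

theorem eq_zero_of_apply_mul_eq_add {G M : Type*} [Monoid G] [AddCancelMonoid M]
    [IsAddTorsionFree M] {α : G → M} {t : G} (ht : IsOfFinOrder t) {d : M} (hd : ∀ γ, α (γ * t) = α γ + d) :
    d = 0 := by
  have h := apply_mul_pow_eq_add_nsmul hd 1 (orderOf t)
  rw [pow_orderOf_eq_one, mul_one, left_eq_add] at h
  exact (nsmul_eq_zero_iff_right ht.orderOf_pos.ne').mp h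

theorem stmt8_general {Γ : Type*} [Group Γ] {H : Type*}
    [NormedAddCommGroup H] [InnerProductSpace ℝ H]
    (S : Finset Γ)
    (hgen : Subgroup.closure (S : Set Γ) = ⊤)
    (α : Γ → H)
    (hinv : ∀ γ γ₁ γ₂ : Γ, ‖α (γ * γ₁) - α (γ * γ₂)‖ = ‖α γ₁ - α γ₂‖)
    (hflat : ∀ γ : Γ, ∑ s ∈ S, α (γ * s) = (S.card : ℝ) • α γ)
    (t : Γ) (htfin : IsOfFinOrder t) (ht : ∀ s ∈ S, t⁻¹ * s * t ∈ S) :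
    ∀ γ : Γ, α (γ * t) = α γ := by
  set f : Γ → H := fun γ ↦ α (γ * t) - α γ
  have hnorm : ∀ γ, ‖f γ‖ = ‖f 1‖ := fun γ ↦ by simpa [f] using hinv γ t 1
  have hflat_f : ∀ γ, ∑ s ∈ S, f (γ * s) = (S.card : ℝ) • f γ := fun γ ↦ by
    have hshift : ∑ s ∈ S, α (γ * s * t) = (S.card : ℝ) • α (γ * t) :=
      calc ∑ s ∈ S, α (γ * s * t) = ∑ s ∈ S, α (γ * t * (t⁻¹ * s * t)) := by
            simp only [mul_assoc, mul_inv_cancel_left]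
        _ = (S.card : ℝ) • α (γ * t) := (S.sum_comp_conj_eq_sum ht _).trans (hflat _)
    simp only [f, Finset.sum_sub_distrib, hshift, hflat γ, smul_sub]
  have hconst : ∀ γ, f γ = f 1 := eq_apply_one_of_apply_mul_eq hgen fun γ s hs ↦
    eq_of_norm_le_of_sum_eq_card_smul S (fun s ↦ f (γ * s)) (f γ)
      (fun s _ ↦ by rw [hnorm, hnorm γ]) (hflat_f γ) s hs
  have : IsAddTorsionFree H := .of_isTorsionFree ℝ H
  have hzero : f 1 = 0 :=
    eq_zero_of_apply_mul_eq_add (α := α) htfin fun γ ↦ by rw [← hconst γ, add_sub_cancel]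
  intro γ
  rw [← sub_eq_zero]
  exact (hconst γ).trans hzero

theorem stmt8 {Γ : Type*} [Group Γ] {H : Type*}
    [NormedAddCommGroup H] [InnerProductSpace ℝ H] [CompleteSpace H]
    (S : Finset Γ) (hsym : ∀ s ∈ S, s⁻¹ ∈ S)
    (hgen : Subgroup.closure (S : Set Γ) = ⊤)
    (α : Γ → H)
    (hinv : ∀ γ γ₁ γ₂ : Γ, ‖α (γ * γ₁) - α (γ * γ₂)‖ = ‖α γ₁ - α γ₂‖)
    (hflat : ∀ γ : Γ, ∑ s ∈ S, α (γ * s) = (S.card : ℝ) • α γ)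
    (t : Γ) (htfin : IsOfFinOrder t) (ht : ∀ s ∈ S, t⁻¹ * s * t ∈ S) :
    ∀ γ : Γ, α (γ * t) = α γ :=
  stmt8_general S hgen α hinv hflat t htfin ht
end

section
/- Let S and S* be the bilateral shift and its adjoint on ℓ²(ℤ), and for θ ∈ [0,1] let M_θ be the multiplication operator (M_θ ξ)(n) = 2cos(2πθn)·ξ(n). Define Harper's operator H_θ = S + S* + M_θ. If the element T = (e + e⁻¹ + g + g⁻¹)(f + f⁻¹) - 8·1 - 2η₁(e + e⁻¹ + g + g⁻¹ - 4·1) - 4η₂(f + f⁻¹ - 2·1) is mapped under the representation π_θ of the Heisenberg group (e ↦ S, f ↦ exp(2πiθ)·1, g ↦ multiplication by exp(2πiθ·)) to a positive operator for all θ, then for all θ with η₁ > cos(2πθ): H_θ ≤ (4(η₁ + η₂ - 1) - 4η₂cos(2πθ))/(η₁ - cos(2πθ)) · 1 as operators on ℓ²(ℤ). -/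
/-!
Since `f` is central, `π_θ(f + f⁻¹) = 2cos(2πθ)` is a scalar, so
`π_θ(T) = 2(η₁ - cos 2πθ) (c_θ · 1 - H_θ)` with `c_θ` the claimed bound. When `η₁ > cos 2πθ`
the factor is positive and dividing by it preserves positivity.
-/

open Real ContinuousLinearMap

/-- `ℓ²(ℤ)`. -/
noncomputable abbrev l2Z : Type := lp (fun _ : ℤ => ℂ) 2

/-- `T` is the image under `π_θ` of
`(e+e⁻¹+g+g⁻¹)(f+f⁻¹) - 8 - 2η₁(e+e⁻¹+g+g⁻¹-4) - 4η₂(f+f⁻¹-2)`,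
where `π_θ(e)` is the bilateral shift `Sh`, `π_θ(f) = exp(2πiθ)·1`, and
`π_θ(g)+π_θ(g)⁻¹ = M` is the multiplication operator by `2cos(2πθ·)`. -/
noncomputable def HarperT (θ η₁ η₂ : ℝ) (Sh M : l2Z →L[ℂ] l2Z) :
    l2Z →L[ℂ] l2Z :=
  ((2 * Real.cos (2 * π * θ) : ℝ) : ℂ) • (Sh + adjoint Sh + M) -
    (8 : ℂ) • (1 : l2Z →L[ℂ] l2Z) -
    ((2 * η₁ : ℝ) : ℂ) • (Sh + adjoint Sh + M - (4 : ℂ) • (1 : l2Z →L[ℂ] l2Z)) -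
    ((4 * η₂ : ℝ) : ℂ) • (((2 * Real.cos (2 * π * θ) : ℝ) : ℂ) •
        (1 : l2Z →L[ℂ] l2Z) - (2 : ℂ) • (1 : l2Z →L[ℂ] l2Z))

lemma isPositive_div_smul_one_sub {E : Type*} [NormedAddCommGroup E] [InnerProductSpace ℂ E]
    {H : E →L[ℂ] E} {a b : ℝ} (hb : 0 < b)
    (h : ((a : ℂ) • (1 : E →L[ℂ] E) - (b : ℂ) • H).IsPositive) :
    (((a / b : ℝ) : ℂ) • (1 : E →L[ℂ] E) - H).IsPositive := by
  have hscale : ((a / b : ℝ) : ℂ) • (1 : E →L[ℂ] E) - H =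
      ((b⁻¹ : ℝ) : ℂ) • ((a : ℂ) • (1 : E →L[ℂ] E) - (b : ℂ) • H) := by
    have hb' : (b : ℂ) ≠ 0 := Complex.ofReal_ne_zero.mpr hb.ne'
    match_scalars <;> field_simp
  rw [hscale]
  exact h.smul_of_nonneg (Complex.zero_le_real.mpr (inv_nonneg.mpr hb.le))

lemma harperT_eq_smul_one_sub (θ η₁ η₂ : ℝ) (Sh M : l2Z →L[ℂ] l2Z) :
    HarperT θ η₁ η₂ Sh M =
      ((2 * (4 * (η₁ + η₂ - 1) - 4 * η₂ * Real.cos (2 * π * θ)) : ℝ) : ℂ) • 1 -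
        ((2 * (η₁ - Real.cos (2 * π * θ)) : ℝ) : ℂ) • (Sh + adjoint Sh + M) := by
  rw [HarperT]
  match_scalars <;> norm_num <;> ring

theorem stmt16_general (η₁ η₂ : ℝ)
    (Sh M : ℝ → (l2Z →L[ℂ] l2Z))
    -- `π_θ(T)` is a positive operator for all `θ ∈ [0,1]`
    (hpos : ∀ θ ∈ Set.Icc (0 : ℝ) 1, (HarperT θ η₁ η₂ (Sh θ) (M θ)).IsPositive) :
    -- then Harper's operator `H_θ = Sh + Sh* + M_θ` satisfies the norm bound
    ∀ θ ∈ Set.Icc (0 : ℝ) 1, η₁ > Real.cos (2 * π * θ) →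
      (((((4 * (η₁ + η₂ - 1) - 4 * η₂ * Real.cos (2 * π * θ)) /
            (η₁ - Real.cos (2 * π * θ)) : ℝ)) : ℂ) • (1 : l2Z →L[ℂ] l2Z) -
        (Sh θ + adjoint (Sh θ) + M θ)).IsPositive := by
  intro θ hθ hcos
  have hT := harperT_eq_smul_one_sub θ η₁ η₂ (Sh θ) (M θ) ▸ hpos θ hθ
  have hH := isPositive_div_smul_one_sub (by linarith) hT
  rwa [mul_div_mul_left _ _ two_ne_zero] at hH

theorem stmt16 (η₁ η₂ : ℝ) (hη₁ : 1 ≤ η₁)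
    (Sh M : ℝ → (l2Z →L[ℂ] l2Z))
    -- `Sh θ` is the bilateral shift
    (hSh : ∀ θ : ℝ, ∀ (ξ : l2Z) (n : ℤ), (Sh θ) ξ n = ξ (n - 1))
    -- `M θ` is multiplication by `2cos(2πθn)`
    (hM : ∀ θ : ℝ, ∀ (ξ : l2Z) (n : ℤ),
      (M θ) ξ n = ((2 * Real.cos (2 * π * θ * n) : ℝ) : ℂ) * ξ n)
    -- `π_θ(T)` is a positive operator for all `θ ∈ [0,1]`
    (hpos : ∀ θ ∈ Set.Icc (0 : ℝ) 1, (HarperT θ η₁ η₂ (Sh θ) (M θ)).IsPositive) :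
    -- then Harper's operator `H_θ = Sh + Sh* + M_θ` satisfies the norm bound
    ∀ θ ∈ Set.Icc (0 : ℝ) 1, η₁ > Real.cos (2 * π * θ) →
      (((((4 * (η₁ + η₂ - 1) - 4 * η₂ * Real.cos (2 * π * θ)) /
            (η₁ - Real.cos (2 * π * θ)) : ℝ)) : ℂ) • (1 : l2Z →L[ℂ] l2Z) -
        (Sh θ + adjoint (Sh θ) + M θ)).IsPositive :=
  stmt16_general η₁ η₂ Sh M hpos
end
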